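/- arXiv:1812.04390 — 2 statements merged into one kernel-verified Lean document; each statement's English description precedes it below -/
import Mathlib

section
/- For every integer n ≥ 1, every field F, every β ∈ F, all y_1, y_2, … ∈ F and all pairwise distinct x_1, …, x_n ∈ F, one has 1 = Σ_{i=1}^n [x_i|y]^{n−1} · ∏_{j≠i} (1+βx_j)/(x_i − x_j). -/
/-!
Let `Q(X) = [X|y]^{n-1}`, a polynomial of degree at most `n - 1`, and evaluate its
homogenisation of degree `n - 1` at the point `(1 : -β)` of the projective line. Lagrange
interpolation at the nodes `x_i`, homogenised, turns this value into the right-hand side, since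
`X - x_j` homogenises to `X₀ - x_j X₁`, which is `1 + β x_j` at `(1, -β)`. On the other hand
`X ⊕ y_t` homogenises to `(1 + β y_t) X₀ + y_t X₁`, which is `1` at `(1, -β)`, so the value is `1`.
-/

/-- `[x|y]^j = (x ⊕ y_1)⋯(x ⊕ y_j)` where `a ⊕ b = a + b + βab`; `y t` is `y_{t+1}`. -/
def fpow {F : Type*} [Field F] (β : F) (y : ℕ → F) (x : F) (j : ℕ) : F :=
  ∏ t ∈ Finset.range j, (x + y t + β * x * y t)

open Polynomial Finset

theorem eval_homogenize_basisDivisor {F : Type*} [Field F] (a b z w : F) :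
    MvPolynomial.eval ![z, w] ((Lagrange.basisDivisor a b).homogenize 1) =
      (z - w * b) / (a - b) := by
  simp only [Lagrange.basisDivisor, homogenize_C_mul, homogenize_sub, homogenize_X one_ne_zero,
    homogenize_C, map_mul, map_sub, MvPolynomial.eval_C, MvPolynomial.eval_X,
    Matrix.cons_val_zero, Matrix.cons_val_one, Matrix.cons_val_fin_one, tsub_self, pow_zero,
    pow_one, mul_one]
  ring

theorem eval_homogenize_eq_sum_lagrange {F ι : Type*} [Field F] [DecidableEq ι] {s : Finset ι}
    {v : ι → F} (hvs : Set.InjOn v s) {p : F[X]} (hp : p.degree < #s) (z w : F) :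
    MvPolynomial.eval ![z, w] (p.homogenize (#s - 1)) =
      ∑ i ∈ s, p.eval (v i) * ∏ j ∈ s.erase i, (z - w * v j) / (v i - v j) := by
  have homogenize_basis : ∀ i ∈ s, (Lagrange.basis s v i).homogenize (#s - 1) =
      ∏ j ∈ s.erase i, (Lagrange.basisDivisor (v i) (v j)).homogenize 1 := fun i hi => by
    rw [← homogenize_finsetProd fun j _ => ?_]
    · simp [Lagrange.basis, card_erase_of_mem hi]
    · rw [Lagrange.basisDivisor]
      compute_degree
  conv_lhs => rw [Lagrange.eq_interpolate hvs hp]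
  simp only [Lagrange.interpolate_apply, homogenize_finsetSum, homogenize_C_mul, map_sum, map_mul,
    MvPolynomial.eval_C]
  refine sum_congr rfl fun i hi => ?_
  simp [homogenize_basis i hi, eval_homogenize_basisDivisor]

noncomputable def fpowPoly {F : Type*} [Field F] (β : F) (y : ℕ → F) (j : ℕ) : F[X] :=
  ∏ t ∈ range j, (X + C (y t) + C β * X * C (y t))

section

variable {F : Type*} [Field F] (β : F)

theorem natDegree_fpowPoly_factor_le (c : F) : (X + C c + C β * X * C c).natDegree ≤ 1 := by
  compute_degree

theorem eval_homogenize_fpowPoly_factor (c : F) :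
    MvPolynomial.eval ![1, -β] ((X + C c + C β * X * C c).homogenize 1) = 1 := by
  rw [mul_right_comm, ← C_mul, homogenize_add, homogenize_add, homogenize_C_mul,
    homogenize_X one_ne_zero, homogenize_C]
  simp only [map_add, map_mul, MvPolynomial.eval_C, MvPolynomial.eval_X,
    Matrix.cons_val_zero, Matrix.cons_val_one, Matrix.cons_val_fin_one, tsub_self, pow_zero,
    pow_one, mul_one]
  ring

variable (y : ℕ → F) (j : ℕ)

theorem eval_fpowPoly (x : F) : (fpowPoly β y j).eval x = fpow β y x j := by
  simp [fpowPoly, fpow, eval_prod]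

theorem natDegree_fpowPoly_le : (fpowPoly β y j).natDegree ≤ j := by
  refine (natDegree_prod_le _ _).trans ?_
  simpa using sum_le_sum fun t (_ : t ∈ range j) => natDegree_fpowPoly_factor_le β (y t)

theorem eval_homogenize_fpowPoly :
    MvPolynomial.eval ![1, -β] ((fpowPoly β y j).homogenize j) = 1 := by
  have h := homogenize_finsetProd fun t (_ : t ∈ range j) => natDegree_fpowPoly_factor_le β (y t)
  rw [sum_const, card_range, smul_eq_mul, mul_one] at h
  rw [fpowPoly, h, map_prod]
  exact prod_eq_one fun t _ => eval_homogenize_fpowPoly_factor β (y t)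

end

/-- Generalized Good identity: `1 = Σ_{i=1}^n [x_i|y]^{n−1} ∏_{j≠i} (1+βx_j)/(x_i − x_j)`. -/
theorem stmt3 {F : Type*} [Field F] (n : ℕ) (hn : 1 ≤ n) (β : F) (y : ℕ → F)
    (x : Fin n → F) (hx : Function.Injective x) :
    (1 : F) = ∑ i : Fin n, fpow β y (x i) (n - 1)
        * ∏ j ∈ Finset.univ.erase i, (1 + β * x j) / (x i - x j) := by
  have hdeg : (fpowPoly β y (n - 1)).degree < #(univ : Finset (Fin n)) := by
    rw [card_univ, Fintype.card_fin]
    exact (degree_le_of_natDegree_le (natDegree_fpowPoly_le β y _)).trans_lt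
      (by exact_mod_cast Nat.sub_lt hn one_pos)
  have h := eval_homogenize_eq_sum_lagrange hx.injOn hdeg 1 (-β)
  rw [card_univ, Fintype.card_fin, eval_homogenize_fpowPoly] at h
  simpa [eval_fpowPoly] using h
end

section
/- Let 0 ≤ k ≤ n and m ≥ k be integers, and let λ = (λ_1 ≥ ⋯ ≥ λ_k ≥ 0) be a partition with λ_1 ≤ m − k. Set μ = (m−k, m−k, …, m−k, λ_1, λ_2, …, λ_k), the partition with n parts whose first n−k parts equal m−k followed by the parts of λ. Then G_μ(x_1,…,x_n|y) = Σ_{S ∈ binom([n],k)} G_λ(x_S|y) · (∏_{i∈S}(1+βx_i)^{n−k} · ∏_{j∈S̄}[x_j|y]^m) / (∏_{i∈S}∏_{j∈S̄}(x_j − x_i)), where G_λ(x_S|y) is the factorial Grothendieck polynomial in the k variables x_S. -/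
/-- The factorial Grothendieck polynomial, given by the Ikeda–Naruse determinantal formula
`G_λ(x|y) = det([x_i|y]^{λ_j+n−j}(1+βx_i)^{j−1})_{1≤i,j≤n} / ∏_{i<j}(x_i − x_j)`. -/
noncomputable def Groth {F : Type*} [Field F] (β : F) (y : ℕ → F) {n : ℕ}
    (lam : Fin n → ℕ) (x : Fin n → F) : F :=
  (Matrix.of fun i j : Fin n =>
      fpow β y (x i) (lam j + (n - 1 - (j : ℕ))) * (1 + β * x i) ^ (j : ℕ)).det
    / ∏ i : Fin n, ∏ j ∈ Finset.Ioi i, (x i - x j)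

open Finset Matrix Polynomial

lemma Finset.prod_orderEmbOfFin {M α : Type*} [CommMonoid M] [LinearOrder α] {k : ℕ}
    (s : Finset α) (h : s.card = k) (f : α → M) : ∏ i, f (s.orderEmbOfFin h i) = ∏ a ∈ s, f a := by
  conv_rhs => rw [← map_orderEmbOfFin_univ s h, prod_map]
  rfl

lemma Fin.prod_Ioi_eq_prod_ite {M : Type*} [CommMonoid M] {n : ℕ} (a : Fin n) (f : Fin n → M) :
    ∏ b ∈ Ioi a, f b = ∏ b, if a < b then f b else 1 := by
  rw [← prod_filter, filter_lt_eq_Ioi]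

section Vandermonde
variable {R : Type*} [CommRing R]

def vandProd {n : ℕ} (z : Fin n → R) : R := ∏ i, ∏ j ∈ Ioi i, (z i - z j)

lemma vandProd_ne_zero [IsDomain R] {n : ℕ} {z : Fin n → R} (hz : Function.Injective z) :
    vandProd z ≠ 0 :=
  prod_ne_zero_iff.mpr fun _ _ => prod_ne_zero_iff.mpr fun _ hj =>
    sub_ne_zero_of_ne (hz.ne (mem_Ioi.mp hj).ne)

lemma vandProd_append {r k : ℕ} (u : Fin r → R) (v : Fin k → R) :
    vandProd (Fin.append u v) = vandProd u * vandProd v * ∏ i, ∏ t, (u i - v t) := by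
  have hlt (i : Fin r) (t : Fin k) : (i : ℕ) < r + t := by omega
  have hnlt (i : Fin r) (t : Fin k) : ¬ r + (t : ℕ) < i := by omega
  simp only [vandProd, Fin.prod_Ioi_eq_prod_ite, Fin.prod_univ_add, Fin.append_left,
    Fin.append_right, Fin.lt_def, Fin.val_castAdd, Fin.val_natAdd, add_lt_add_iff_left, hlt, hnlt,
    if_true, if_false, prod_const_one, prod_mul_distrib]
  ring

end Vandermonde

section ProdXAddC
variable {R : Type*} [CommRing R]

lemma scaleRoots_prod_X_add_C [NoZeroDivisors R] (a : ℕ → R) (w : R) (s : ℕ) :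
    (∏ t ∈ range s, (X + C (a t))).scaleRoots w = ∏ t ∈ range s, (X + C (a t * w)) := by
  induction s with
  | zero => simp [one_scaleRoots]
  | succ s ih =>
    rw [prod_range_succ, prod_range_succ, mul_scaleRoots_of_noZeroDivisors, ih,
      X_add_C_scaleRoots]

lemma natDegree_prod_X_add_C [Nontrivial R] (a : ℕ → R) (s : ℕ) :
    (∏ t ∈ range s, (X + C (a t))).natDegree = s := by
  rw [natDegree_prod_of_monic _ _ fun t _ => monic_X_add_C (a t)]
  simp

lemma monic_prod_X_add_C (a : ℕ → R) (s : ℕ) : (∏ t ∈ range s, (X + C (a t))).Monic :=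
  monic_prod_of_monic _ _ fun t _ => monic_X_add_C (a t)

end ProdXAddC

section FactorialPowers
variable {F : Type*} [Field F]

lemma fpow_add (β : F) (y : ℕ → F) (x : F) (a b : ℕ) :
    fpow β y x (a + b) = fpow β y x a * fpow β (fun t => y (a + t)) x b := by
  simp [fpow, prod_range_add]

/-- `[z|y]^s` is the homogenization of `∏_{t<s} (X + y_t)` at `(z, 1 + βz)`. -/
lemma fpow_mul_pow_eq_sum {r s : ℕ} (hs : s < r) (β : F) (y : ℕ → F) (z : F) :
    fpow β y z s * (1 + β * z) ^ (r - 1 - s) =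
      ∑ e : Fin r, z ^ (e : ℕ) * (1 + β * z) ^ (Fin.rev e : ℕ) *
        (∏ t ∈ range s, (X + C (y t))).coeff e := by
  have hfpow :
      fpow β y z s = ((∏ t ∈ range s, (X + C (y t))).scaleRoots (1 + β * z)).eval z := by
    rw [scaleRoots_prod_X_add_C, eval_prod, fpow]
    refine prod_congr rfl fun t _ => ?_
    simp only [eval_add, eval_X, eval_C]
    ring
  have hdeg : ((∏ t ∈ range s, (X + C (y t))).scaleRoots (1 + β * z)).natDegree < r := by
    rwa [natDegree_scaleRoots, natDegree_prod_X_add_C]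
  rw [hfpow, eval_eq_sum_range' hdeg, sum_mul, ← Fin.sum_univ_eq_sum_range]
  refine sum_congr rfl fun e _ => ?_
  rw [coeff_scaleRoots, natDegree_prod_X_add_C, Fin.val_rev]
  rcases le_or_gt (e : ℕ) s with he | he
  · rw [show r - (e + 1) = (s - e) + (r - 1 - s) by omega, pow_add]
    ring
  · rw [coeff_eq_zero_of_natDegree_lt (by rwa [natDegree_prod_X_add_C])]
    ring

def grothMatrix (β : F) (y : ℕ → F) {n : ℕ} (lam : Fin n → ℕ) (x : Fin n → F) :
    Matrix (Fin n) (Fin n) F :=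
  of fun i j => fpow β y (x i) (lam j + (n - 1 - (j : ℕ))) * (1 + β * x i) ^ (j : ℕ)

lemma Groth_eq_det_div (β : F) (y : ℕ → F) {n : ℕ} (lam : Fin n → ℕ) (x : Fin n → F) :
    Groth β y lam x = (grothMatrix β y lam x).det / vandProd x := rfl

/-- `grothMatrix β y 0 z` is the projective Vandermonde matrix of `(1 + βz, z)` times a
unitriangular matrix, and `(1 + βz_j) z_i − (1 + βz_i) z_j = z_i − z_j`. -/
lemma det_grothMatrix_zero (β : F) (y : ℕ → F) {n : ℕ} (z : Fin n → F) :
    (grothMatrix β y 0 z).det = vandProd z := by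
  set w := fun i => 1 + β * z i
  set P : Matrix (Fin n) (Fin n) F := of fun e s => (∏ t ∈ range s, (X + C (y t))).coeff e
  have hP : P.det = 1 := det_matrixOfPolynomials _ (fun s => natDegree_prod_X_add_C y s)
    (fun s => monic_prod_X_add_C y s)
  have hprod : grothMatrix β y 0 z =
      (projVandermonde z w).submatrix id Fin.revPerm * P.submatrix Fin.revPerm Fin.revPerm := by
    rw [submatrix_mul_equiv]
    ext i j
    have hj : (n - 1 - (Fin.rev j : ℕ)) = j := by rw [Fin.val_rev]; omega
    simp only [grothMatrix, of_apply, Pi.zero_apply, zero_add, submatrix_apply, id_eq,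
      Fin.revPerm_apply, mul_apply, projVandermonde_apply, P]
    rw [← fpow_mul_pow_eq_sum (Fin.rev j).isLt, hj, Fin.val_rev]
    congr 2
    omega
  have hproj : (projVandermonde z w).submatrix id Fin.revPerm = projVandermonde w z := by
    ext i j
    simp [projVandermonde_apply, mul_comm]
  rw [hprod, det_mul, hproj, det_projVandermonde, det_submatrix_equiv_self, hP, mul_one]
  refine prod_congr rfl fun i _ => prod_congr rfl fun j _ => ?_
  simp only [w]
  ring

end FactorialPowers

section Laplace
variable {R : Type*} [CommRing R] {r k : ℕ}

lemma card_compl_eq_of_card_eq {S : Finset (Fin (r + k))} (hS : S.card = k) : Sᶜ.card = r := by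
  rw [card_compl, Fintype.card_fin, hS, Nat.add_sub_cancel]

noncomputable def shufflePerm (S : {S : Finset (Fin (r + k)) // S.card = k}) :
    Equiv.Perm (Fin (r + k)) :=
  Equiv.ofBijective (Fin.append (S.1ᶜ.orderEmbOfFin (card_compl_eq_of_card_eq S.2))
      (S.1.orderEmbOfFin S.2)) <| Finite.injective_iff_bijective.mp <|
    Fin.append_injective_iff.mpr ⟨(orderEmbOfFin _ _).injective, (orderEmbOfFin _ _).injective,
      fun i t h => mem_compl.mp (orderEmbOfFin_mem _ _ i) (h ▸ orderEmbOfFin_mem _ _ t)⟩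

lemma shufflePerm_castAdd (S : {S : Finset (Fin (r + k)) // S.card = k}) (i : Fin r) :
    shufflePerm S (Fin.castAdd k i) = S.1ᶜ.orderEmbOfFin (card_compl_eq_of_card_eq S.2) i :=
  Fin.append_left _ _ i

lemma shufflePerm_natAdd (S : {S : Finset (Fin (r + k)) // S.card = k}) (t : Fin k) :
    shufflePerm S (Fin.natAdd r t) = S.1.orderEmbOfFin S.2 t :=
  Fin.append_right _ _ t

noncomputable def shuffleBlockPerm (S : {S : Finset (Fin (r + k)) // S.card = k})
    (p : Equiv.Perm (Fin r) × Equiv.Perm (Fin k)) : Equiv.Perm (Fin (r + k)) :=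
  shufflePerm S * finSumFinEquiv.permCongr (p.1.sumCongr p.2)

lemma shuffleBlockPerm_castAdd (S : {S : Finset (Fin (r + k)) // S.card = k})
    (p : Equiv.Perm (Fin r) × Equiv.Perm (Fin k)) (i : Fin r) :
    shuffleBlockPerm S p (Fin.castAdd k i) = shufflePerm S (Fin.castAdd k (p.1 i)) := by
  simp [shuffleBlockPerm, Equiv.permCongr_apply]

lemma shuffleBlockPerm_natAdd (S : {S : Finset (Fin (r + k)) // S.card = k})
    (p : Equiv.Perm (Fin r) × Equiv.Perm (Fin k)) (t : Fin k) :
    shuffleBlockPerm S p (Fin.natAdd r t) = shufflePerm S (Fin.natAdd r (p.2 t)) := by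
  simp [shuffleBlockPerm, Equiv.permCongr_apply]

lemma sign_shuffleBlockPerm (S : {S : Finset (Fin (r + k)) // S.card = k})
    (p : Equiv.Perm (Fin r) × Equiv.Perm (Fin k)) :
    Equiv.Perm.sign (shuffleBlockPerm S p) =
      Equiv.Perm.sign (shufflePerm S) * (Equiv.Perm.sign p.1 * Equiv.Perm.sign p.2) := by
  rw [shuffleBlockPerm, map_mul, Equiv.Perm.sign_permCongr, Equiv.Perm.sign_sumCongr]

lemma image_shuffleBlockPerm_natAdd (S : {S : Finset (Fin (r + k)) // S.card = k})
    (p : Equiv.Perm (Fin r) × Equiv.Perm (Fin k)) :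
    univ.image (fun t => shuffleBlockPerm S p (Fin.natAdd r t)) = S.1 := by
  ext a
  simp only [shuffleBlockPerm_natAdd, shufflePerm_natAdd, mem_image, mem_univ, true_and]
  constructor
  · rintro ⟨t, rfl⟩
    exact orderEmbOfFin_mem _ _ _
  · intro ha
    obtain ⟨t, rfl⟩ : a ∈ Set.range (S.1.orderEmbOfFin S.2) := by
      rwa [range_orderEmbOfFin]
    exact ⟨p.2.symm t, by rw [Equiv.apply_symm_apply]⟩

lemma bijective_shuffleBlockPerm :
    Function.Bijective fun x : {S : Finset (Fin (r + k)) // S.card = k} ×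
      (Equiv.Perm (Fin r) × Equiv.Perm (Fin k)) => shuffleBlockPerm x.1 x.2 := by
  rw [Fintype.bijective_iff_injective_and_card]
  refine ⟨?_, ?_⟩
  · rintro ⟨S, p⟩ ⟨S', p'⟩ h
    obtain rfl : S = S' := Subtype.ext <| by
      rw [← image_shuffleBlockPerm_natAdd S p, ← image_shuffleBlockPerm_natAdd S' p']
      simp only at h
      rw [h]
    have hp := finSumFinEquiv.permCongr.injective (mul_left_cancel h)
    have h1 : p.1 = p'.1 := Equiv.ext fun i => Sum.inl_injective (congrArg (· (Sum.inl i)) hp)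
    have h2 : p.2 = p'.2 := Equiv.ext fun t => Sum.inr_injective (congrArg (· (Sum.inr t)) hp)
    rw [Prod.ext h1 h2]
  · simp only [Fintype.card_prod, Fintype.card_perm, Fintype.card_fin, Fintype.card_finset_len,
      ← mul_assoc, Nat.add_choose_mul_factorial_mul_factorial]

theorem det_eq_sum_sign_shufflePerm_mul_det_mul_det (M : Matrix (Fin (r + k)) (Fin (r + k)) R) :
    M.det = ∑ S : {S : Finset (Fin (r + k)) // S.card = k},
      Equiv.Perm.sign (shufflePerm S) *
        (M.submatrix (S.1ᶜ.orderEmbOfFin (card_compl_eq_of_card_eq S.2)) (Fin.castAdd k)).det *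
        (M.submatrix (S.1.orderEmbOfFin S.2) (Fin.natAdd r)).det := by
  rw [det_apply, ← bijective_shuffleBlockPerm.sum_comp, Fintype.sum_prod_type]
  refine sum_congr rfl fun S _ => ?_
  simp only [det_apply, submatrix_apply, Units.smul_def, zsmul_eq_mul, mul_sum, sum_mul,
    Fintype.sum_prod_type]
  rw [sum_comm]
  refine sum_congr rfl fun q _ => sum_congr rfl fun p _ => ?_
  rw [sign_shuffleBlockPerm, Fin.prod_univ_add]
  simp only [shuffleBlockPerm_castAdd, shuffleBlockPerm_natAdd, shufflePerm_castAdd,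
    shufflePerm_natAdd]
  push_cast
  ring

end Laplace

section Main
variable {F : Type*} [Field F]

/-- `grothMatrix 0 0 0 z` is the Vandermonde matrix of `z` with its columns reversed. -/
lemma vandProd_comp_perm {n : ℕ} (z : Fin n → F) (σ : Equiv.Perm (Fin n)) :
    vandProd (z ∘ σ) = Equiv.Perm.sign σ * vandProd z := by
  rw [← det_grothMatrix_zero (0 : F) 0 (z ∘ σ), ← det_grothMatrix_zero (0 : F) 0 z]
  exact det_permute σ (grothMatrix (0 : F) 0 0 z)

lemma vandProd_eq_sign_shufflePerm_mul {r k : ℕ} (x : Fin (r + k) → F)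
    (S : {S : Finset (Fin (r + k)) // S.card = k}) :
    vandProd x = Equiv.Perm.sign (shufflePerm S) *
      (vandProd (x ∘ S.1ᶜ.orderEmbOfFin (card_compl_eq_of_card_eq S.2)) *
        vandProd (x ∘ S.1.orderEmbOfFin S.2) * ∏ i ∈ S.1, ∏ j ∈ S.1ᶜ, (x j - x i)) := by
  have happend : x ∘ shufflePerm S = Fin.append
      (x ∘ S.1ᶜ.orderEmbOfFin (card_compl_eq_of_card_eq S.2)) (x ∘ S.1.orderEmbOfFin S.2) := by
    ext i
    refine Fin.addCases (fun i => ?_) (fun t => ?_) i <;>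
      simp [shufflePerm_castAdd, shufflePerm_natAdd]
  have hcross : ∏ i, ∏ t, ((x ∘ S.1ᶜ.orderEmbOfFin (card_compl_eq_of_card_eq S.2)) i -
      (x ∘ S.1.orderEmbOfFin S.2) t) = ∏ i ∈ S.1, ∏ j ∈ S.1ᶜ, (x j - x i) := by
    refine ((prod_orderEmbOfFin _ _ fun j => ∏ t, (x j - x (S.1.orderEmbOfFin S.2 t))).trans
      ?_).trans prod_comm
    exact prod_congr rfl fun j _ => prod_orderEmbOfFin _ _ fun i => x j - x i
  have hsign :
      ((Equiv.Perm.sign (shufflePerm S) : ℤ) : F) * Equiv.Perm.sign (shufflePerm S) = 1 := by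
    rw [← Int.cast_mul, ← Units.val_mul, Int.units_mul_self, Units.val_one, Int.cast_one]
  rw [← hcross, ← vandProd_append, ← happend, vandProd_comp_perm, ← mul_assoc, hsign, one_mul]

section AppendConst
variable (β : F) (y : ℕ → F) {r k : ℕ} (a : ℕ) (lam : Fin k → ℕ) (x : Fin (r + k) → F)

lemma det_grothMatrix_append_const_castAdd (f : Fin r → Fin (r + k)) :
    ((grothMatrix β y (Fin.append (fun _ : Fin r => a) lam) x).submatrix f (Fin.castAdd k)).det =
      (∏ i, fpow β y (x (f i)) (a + k)) * vandProd (x ∘ f) := by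
  have hentries : (grothMatrix β y (Fin.append (fun _ : Fin r => a) lam) x).submatrix f
      (Fin.castAdd k) = of fun i j =>
        fpow β y (x (f i)) (a + k) * grothMatrix β (fun t => y (a + k + t)) 0 (x ∘ f) i j := by
    ext i j
    have hj : a + (r + k - 1 - j) = (a + k) + (0 + (r - 1 - j)) := by omega
    simp only [grothMatrix, submatrix_apply, of_apply, Function.comp_apply, Fin.append_left,
      Fin.val_castAdd, hj, Pi.zero_apply, zero_add]
    rw [fpow_add β y _ (a + k) (r - 1 - j)]
    ring
  rw [hentries, det_mul_column, det_grothMatrix_zero]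

lemma det_grothMatrix_append_const_natAdd (g : Fin k → Fin (r + k)) :
    ((grothMatrix β y (Fin.append (fun _ : Fin r => a) lam) x).submatrix g (Fin.natAdd r)).det =
      (∏ t, (1 + β * x (g t)) ^ r) * (grothMatrix β y lam (x ∘ g)).det := by
  have hentries : (grothMatrix β y (Fin.append (fun _ : Fin r => a) lam) x).submatrix g
      (Fin.natAdd r) = of fun s t => (1 + β * x (g s)) ^ r * grothMatrix β y lam (x ∘ g) s t := by
    ext s t
    have ht : r + k - 1 - (r + t) = k - 1 - t := by omega
    simp only [grothMatrix, submatrix_apply, of_apply, Function.comp_apply, Fin.append_right,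
      Fin.val_natAdd, ht, pow_add]
    ring
  rw [hentries, det_mul_column]

theorem Groth_append_const (hx : Function.Injective x) :
    Groth β y (Fin.append (fun _ : Fin r => a) lam) x =
      ∑ S : {S : Finset (Fin (r + k)) // S.card = k},
        Groth β y lam (x ∘ S.1.orderEmbOfFin S.2) *
          ((∏ i ∈ S.1, (1 + β * x i) ^ r) * (∏ j ∈ S.1ᶜ, fpow β y (x j) (a + k)) /
            ∏ i ∈ S.1, ∏ j ∈ S.1ᶜ, (x j - x i)) := by
  rw [Groth_eq_det_div, det_eq_sum_sign_shufflePerm_mul_det_mul_det, sum_div]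
  refine sum_congr rfl fun S _ => ?_
  have hSc := card_compl_eq_of_card_eq S.2
  have hu := vandProd_ne_zero (hx.comp (S.1ᶜ.orderEmbOfFin hSc).injective)
  have hv := vandProd_ne_zero (hx.comp (S.1.orderEmbOfFin S.2).injective)
  have hfpow : ∏ i, fpow β y (x (S.1ᶜ.orderEmbOfFin hSc i)) (a + k) =
      ∏ j ∈ S.1ᶜ, fpow β y (x j) (a + k) := prod_orderEmbOfFin _ _ fun j => fpow β y (x j) (a + k)
  have hpow : ∏ t, (1 + β * x (S.1.orderEmbOfFin S.2 t)) ^ r = ∏ i ∈ S.1, (1 + β * x i) ^ r :=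
    prod_orderEmbOfFin _ _ fun i => (1 + β * x i) ^ r
  rw [det_grothMatrix_append_const_castAdd, det_grothMatrix_append_const_natAdd,
    vandProd_eq_sign_shufflePerm_mul x S, Groth_eq_det_div, hfpow, hpow]
  have hsign : ((Equiv.Perm.sign (shufflePerm S) : ℤ) : F) ≠ 0 := by
    rcases Int.units_eq_one_or (Equiv.Perm.sign (shufflePerm S)) with h | h <;> simp [h]
  field_simp [hu, hv, hsign]

end AppendConst

end Main

/-- Fehér–Némethi–Rimányi type identity for factorial Grothendieck polynomials:
with `μ = (m−k,…,m−k,λ_1,…,λ_k)` (the value `m−k` repeated `n−k` times),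
`G_μ(x|y) = Σ_S G_λ(x_S|y) ∏_{i∈S}(1+βx_i)^{n−k} ∏_{j∈S̄}[x_j|y]^m / ∏_{i∈S}∏_{j∈S̄}(x_j−x_i)`. -/
theorem stmt5 {F : Type*} [Field F] (β : F) (y : ℕ → F) (n k m : ℕ)
    (hkn : k ≤ n) (hkm : k ≤ m)
    (x : Fin n → F) (hx : Function.Injective x)
    (lam : Fin k → ℕ) :
    Groth β y (fun i : Fin n =>
        if h : (i : ℕ) < n - k then m - k
        else lam ⟨(i : ℕ) - (n - k), by have := i.isLt; omega⟩) x
      = ∑ S : {S : Finset (Fin n) // S.card = k},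
          Groth β y lam (fun i : Fin k => x ((S.1.orderIsoOfFin S.2 i : Fin n)))
            * ((∏ i ∈ S.1, (1 + β * x i) ^ (n - k)) * (∏ j ∈ S.1ᶜ, fpow β y (x j) m)
              / ∏ i ∈ S.1, ∏ j ∈ S.1ᶜ, (x j - x i)) := by
  obtain ⟨r, rfl⟩ : ∃ r, n = r + k := ⟨n - k, by omega⟩
  have hμ : (fun i : Fin (r + k) => if h : (i : ℕ) < r + k - k then m - k
      else lam ⟨(i : ℕ) - (r + k - k), by omega⟩) = Fin.append (fun _ : Fin r => m - k) lam := by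
    funext i
    refine Fin.addCases (fun i => ?_) (fun t => ?_) i <;> simp
  rw [hμ, Groth_append_const β y (m - k) lam x hx, Nat.sub_add_cancel hkm, Nat.add_sub_cancel]
  rfl
end
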